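/- arXiv:math/0509586 — 2 statements merged into one kernel-verified Lean document; each statement's English description precedes it below -/
import Mathlib

section
/- For every real x > 0 and every integer m ≥ 1, P(β(m) < x) ≤ (⌊x⌋ + 1) · max_{t ∈ {0,1,…,⌊x⌋}} P(ξ(t) < x/m). -/
open MeasureTheory Filter
open scoped ENNReal

noncomputable section

/-- The rarefaction index sequence: `rarBeta ξ 0 = 0`, and
`rarBeta ξ (m+1) ω = rarBeta ξ m ω + ξ (rarBeta ξ m ω) ω`; in particular
`rarBeta ξ 1 = ξ 0`, matching `β(1) = ξ(0)`, `β(m+1) = β(m) + ξ(β(m))`. -/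
def rarBeta {Ω : Type*} (ξ : ℕ → Ω → ℕ) : ℕ → Ω → ℕ
  | 0 => fun _ => 0
  | m + 1 => fun ω => rarBeta ξ m ω + ξ (rarBeta ξ m ω) ω

lemma rarBeta_eq_sum {Ω : Type*} (ξ : ℕ → Ω → ℕ) (m : ℕ) (ω : Ω) :
    rarBeta ξ m ω = ∑ k ∈ Finset.range m, ξ (rarBeta ξ k ω) ω := by
  induction m with
  | zero => simp [rarBeta]
  | succ n ih => rw [Finset.sum_range_succ, ← ih]; rfl

lemma rarBeta_mono {Ω : Type*} (ξ : ℕ → Ω → ℕ) (ω : Ω) :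
    Monotone (fun m => rarBeta ξ m ω) := by
  apply monotone_nat_of_le_succ
  intro n
  exact Nat.le_add_right _ _

/-- **Statement**: for every real `x > 0` and every integer `m ≥ 1`,
`P(β(m) < x) ≤ (⌊x⌋ + 1) · max_{t ∈ {0,…,⌊x⌋}} P(ξ(t) < x/m)`. -/
theorem rarefaction_statement
    {Ω : Type*} [MeasurableSpace Ω] (P : Measure Ω) [IsProbabilityMeasure P]
    (ξ : ℕ → Ω → ℕ) (hmeas : ∀ t, Measurable (ξ t))
    (hpos : ∀ t ω, 1 ≤ ξ t ω)
    (x : ℝ) (hx : 0 < x) (m : ℕ) (hm : 1 ≤ m) :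
    P {ω | (rarBeta ξ m ω : ℝ) < x} ≤
      ((⌊x⌋₊ : ℝ≥0∞) + 1) *
        (Finset.range (⌊x⌋₊ + 1)).sup (fun t => P {ω | (ξ t ω : ℝ) < x / m}) := by
  have hm0 : (m : ℝ) ≠ 0 := by positivity
  have hsub : {ω | (rarBeta ξ m ω : ℝ) < x} ⊆
      ⋃ t ∈ Finset.range (⌊x⌋₊ + 1), {ω | (ξ t ω : ℝ) < x / m} := by
    intro ω hω
    simp only [Set.mem_setOf_eq] at hω
    by_contra hcon
    simp only [Set.mem_iUnion, Set.mem_setOf_eq, not_exists, not_lt,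
      Finset.mem_range] at hcon
    have hge : ∀ k ∈ Finset.range m, x / m ≤ (ξ (rarBeta ξ k ω) ω : ℝ) := by
      intro k hk
      apply hcon
      have h1 : rarBeta ξ k ω ≤ rarBeta ξ m ω :=
        rarBeta_mono ξ ω (Finset.mem_range.mp hk).le
      have h2 : (rarBeta ξ k ω : ℝ) ≤ x :=
        le_trans (by exact_mod_cast h1) hω.le
      exact Nat.lt_succ_of_le (Nat.le_floor h2)
    have hsum := Finset.sum_le_sum hge
    rw [Finset.sum_const, Finset.card_range, nsmul_eq_mul] at hsum
    have hβ : (rarBeta ξ m ω : ℝ) = ∑ k ∈ Finset.range m, (ξ (rarBeta ξ k ω) ω : ℝ) := by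
      rw [rarBeta_eq_sum ξ m ω]; push_cast; ring
    rw [mul_div_cancel₀ x hm0] at hsum
    rw [hβ] at hω
    exact absurd hω (not_lt.mpr hsum)
  calc P {ω | (rarBeta ξ m ω : ℝ) < x}
      ≤ P (⋃ t ∈ Finset.range (⌊x⌋₊ + 1), {ω | (ξ t ω : ℝ) < x / m}) :=
        measure_mono hsub
    _ ≤ ∑ t ∈ Finset.range (⌊x⌋₊ + 1), P {ω | (ξ t ω : ℝ) < x / m} :=
        measure_biUnion_finset_le _ _
    _ ≤ ∑ _t ∈ Finset.range (⌊x⌋₊ + 1),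
          (Finset.range (⌊x⌋₊ + 1)).sup (fun t => P {ω | (ξ t ω : ℝ) < x / m}) :=
        Finset.sum_le_sum (fun t ht => Finset.le_sup (f := fun t => P {ω | (ξ t ω : ℝ) < x / m}) ht)
    _ = ((⌊x⌋₊ : ℝ≥0∞) + 1) *
          (Finset.range (⌊x⌋₊ + 1)).sup (fun t => P {ω | (ξ t ω : ℝ) < x / m}) := by
        rw [Finset.sum_const, Finset.card_range, nsmul_eq_mul]
        push_cast
        ring
end
end

section
/- Suppose there exist positive numbers c_n → ∞ and a distribution function G(x), x ≥ 0, such that lim_{n→∞} sup_{t ≥ 0} |P(γ_{n,2}⁺(t) < τ'_{n,⌊c_n x⌋}) − G(x)| = 0 for every continuity point x > 0 of G, where τ'_{n,m} denotes a sum of m i.i.d. copies of η_{n,1} independent of Z_n. Then for every fixed l ∈ ℕ and every continuity point x > 0 of G, P(ξ_n(l) ≤ c_n x) → G(x) as n → ∞. -/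
open MeasureTheory ProbabilityTheory Filter
open scoped ENNReal

noncomputable section

/-- Partial sums `f 1 + ⋯ + f i` (so `psum f 0 = 0`). -/
def psum {Ω : Type*} (f : ℕ → Ω → ℝ) (i : ℕ) (ω : Ω) : ℝ :=
  ∑ l ∈ Finset.Icc 1 i, f l ω

/-- The forward recurrence time `γ₂⁺(t) = ϑ_{N₂(t)+1} − t`, where
`N₂(t) = sup{m ≥ 0 : ϑ_m < t}` and `ϑ_m = ζ₁ + ⋯ + ζ_m`. -/
def fwdTime {Ω : Type*} (ζ : ℕ → Ω → ℝ) (t : ℝ) (ω : Ω) : ℝ :=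
  psum ζ (sSup {m : ℕ | psum ζ m ω < t} + 1) ω - t

/-- `τ_i` is marked by `Z`: some renewal point `ϑ_j` of `Z` lies in `(τ_{i−1}, τ_i]`. -/
def marked {Ω : Type*} (η ζ : ℕ → Ω → ℝ) (i : ℕ) (ω : Ω) : Prop :=
  ∃ j, 1 ≤ j ∧ psum η (i - 1) ω < psum ζ j ω ∧ psum ζ j ω ≤ psum η i ω

/-- `ξ(l) = min{j ≥ 1 : χ(l+j) = 1}`. -/
def markXi {Ω : Type*} (η ζ : ℕ → Ω → ℝ) (l : ℕ) (ω : Ω) : ℕ :=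
  sInf {j : ℕ | 1 ≤ j ∧ marked η ζ (l + j) ω}

/-!
Since `H ⟂ Z` and the `η_i` are i.i.d., `τ_p` is independent of `(Z, τ_{p+k} − τ_p)`, which has the
law of `(Z, τ_k)`. Hence `P(γ₂⁺(τ_p) < τ_{p+k} − τ_p)` is an average over `t = τ_p ≥ 0` of
`P(γ₂⁺(t) < τ_k)` and inherits the uniform approximation by `G`. Pathwise, `{ξ(l) ≤ m}` is squeezed
between such events: a renewal of `Z` within `m - 1` steps after `τ_{l+1}` forces `ξ(l) ≤ m`, and
`ξ(l) ≤ m` forces a renewal within `m + 1` steps after `τ_l`, except on the event that `Z` never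
passes `τ_{l+k}`, of probability about `1 - G(w)` for `k ≈ c_n w`. Letting continuity points of `G`
approach `x` from both sides, and `w → ∞`, gives the limit.
-/

section Deterministic

variable {Ω : Type*} {f η ζ : ℕ → Ω → ℝ} {ω : Ω}

theorem psum_succ (f : ℕ → Ω → ℝ) (n : ℕ) (ω : Ω) :
    psum f (n + 1) ω = psum f n ω + f (n + 1) ω :=
  Finset.sum_Icc_succ_top (by omega) _

theorem psum_eq_sum_range (f : ℕ → Ω → ℝ) (n : ℕ) (ω : Ω) :
    psum f n ω = ∑ i ∈ Finset.range n, f (i + 1) ω := by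
  induction n with
  | zero => simp [psum]
  | succ n ih => rw [psum_succ, ih, Finset.sum_range_succ]

theorem psum_add_sub (f : ℕ → Ω → ℝ) (p k : ℕ) (ω : Ω) :
    psum f (p + k) ω - psum f p ω = ∑ i ∈ Finset.range k, f (p + i + 1) ω := by
  rw [psum_eq_sum_range, psum_eq_sum_range, Finset.sum_range_add, add_sub_cancel_left]

theorem psum_strictMono (hf : ∀ i, 0 < f i ω) : StrictMono (psum f · ω) :=
  strictMono_nat_of_lt_succ fun n => by
    rw [psum_succ]
    linarith [hf (n + 1)]

theorem psum_nonneg (hf : ∀ i, 0 ≤ f i ω) (n : ℕ) : 0 ≤ psum f n ω :=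
  Finset.sum_nonneg fun i _ => hf i

theorem psum_congr {Ω' : Type*} {f' : ℕ → Ω' → ℝ} {ω' : Ω'}
    (h : ∀ i, 1 ≤ i → f i ω = f' i ω') (n : ℕ) : psum f n ω = psum f' n ω' :=
  Finset.sum_congr rfl fun i hi => h i (Finset.mem_Icc.1 hi).1

theorem fwdTime_congr {Ω' : Type*} {ζ' : ℕ → Ω' → ℝ} {ω' : Ω'}
    (h : ∀ i, 1 ≤ i → ζ i ω = ζ' i ω') (t : ℝ) : fwdTime ζ t ω = fwdTime ζ' t ω' := by
  simp only [fwdTime, psum_congr h]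

/-- `ϑ_j` is the first renewal point of `Z` in `[t, ∞)`, unless all of them lie below `t`; then
`N₂(t)` is the supremum of an unbounded set, which Lean evaluates to `0`. -/
theorem fwdTime_cases (hζ : ∀ i, 0 < ζ i ω) (t : ℝ) :
    (∃ j, 1 ≤ j ∧ t ≤ psum ζ j ω ∧ (∀ i, 1 ≤ i → i < j → psum ζ i ω < t) ∧
      fwdTime ζ t ω = psum ζ j ω - t) ∨
    ((∀ n, psum ζ n ω < t) ∧ fwdTime ζ t ω < 0) := by
  have hmono := (psum_strictMono hζ).monotone
  set S := {n : ℕ | psum ζ n ω < t}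
  by_cases hS : BddAbove S
  · refine Or.inl ⟨sSup S + 1, by omega, ?_, fun i hi hiN => ?_, rfl⟩
    · by_contra! h
      exact (sSup S).lt_irrefl (le_csSup hS h)
    · have hne : S.Nonempty := by
        by_contra hempty
        rw [Set.not_nonempty_iff_eq_empty.1 hempty, csSup_empty, bot_eq_zero] at hiN
        omega
      exact (hmono (Nat.lt_succ_iff.1 hiN)).trans_lt (Nat.sSup_mem hne hS)
  · have hall : ∀ n, psum ζ n ω < t := fun n => by
      obtain ⟨m, hm, hnm⟩ := not_bddAbove_iff.1 hS n
      exact (hmono hnm.le).trans_lt hm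
    refine Or.inr ⟨hall, ?_⟩
    show psum ζ (sSup S + 1) ω - t < 0
    rw [Nat.sSup_of_not_bddAbove hS]
    linarith [hall 1]

theorem exists_marked_of_mem_Ioc {l m k : ℕ} (hk : 1 ≤ k)
    (h : psum ζ k ω ∈ Set.Ioc (psum η l ω) (psum η (l + m) ω)) :
    ∃ j, 1 ≤ j ∧ j ≤ m ∧ marked η ζ (l + j) ω := by
  classical
  have hex : ∃ j, psum ζ k ω ≤ psum η (l + j) ω := ⟨m, h.2⟩
  set j := Nat.find hex
  have hj0 : j ≠ 0 := fun hj => (Nat.find_spec hex).not_gt (by simpa [j, hj] using h.1)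
  refine ⟨j, Nat.one_le_iff_ne_zero.2 hj0, Nat.find_min' hex h.2, k, hk, ?_, Nat.find_spec hex⟩
  have := Nat.find_min hex (Nat.sub_one_lt hj0)
  rw [not_le, ← Nat.add_sub_assoc (Nat.one_le_iff_ne_zero.2 hj0)] at this
  exact this

theorem markXi_le_of_mem_Ioc {l m k : ℕ} (hk : 1 ≤ k)
    (h : psum ζ k ω ∈ Set.Ioc (psum η l ω) (psum η (l + m) ω)) : markXi η ζ l ω ≤ m := by
  obtain ⟨j, hj1, hjm, hmarked⟩ := exists_marked_of_mem_Ioc hk h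
  exact (Nat.sInf_le ⟨hj1, hmarked⟩ : markXi η ζ l ω ≤ j).trans hjm

theorem forall_not_marked_of_markXi_le (hη : ∀ i, 0 < η i ω) {l m : ℕ}
    (hξ : markXi η ζ l ω ≤ m)
    (h : ∀ k, 1 ≤ k → psum ζ k ω ∉ Set.Ioc (psum η l ω) (psum η (l + m) ω)) :
    ∀ i, 1 ≤ i → ¬marked η ζ (l + i) ω := by
  intro i hi hmarked
  have hS : {j | 1 ≤ j ∧ marked η ζ (l + j) ω}.Nonempty := ⟨i, hi, hmarked⟩
  obtain ⟨hj1, k, hk1, hlo, hhi⟩ := Nat.sInf_mem hS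
  have hτ := (psum_strictMono hη).monotone
  exact h k hk1 ⟨(hτ (by omega)).trans_lt hlo, hhi.trans (hτ (by simpa [markXi] using hξ))⟩

/-- Without renewal points of `Z` after `τ_l`, no later `τ_i` is marked and `ξ(l) = sInf ∅ = 0`. -/
theorem markXi_le_of_forall_le (hη : ∀ i, 0 < η i ω) {l m : ℕ}
    (h : ∀ k, 1 ≤ k → psum ζ k ω ≤ psum η (l + m) ω) : markXi η ζ l ω ≤ m := by
  by_cases hk : ∃ k, 1 ≤ k ∧ psum η l ω < psum ζ k ω
  · obtain ⟨k, hk1, hlk⟩ := hk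
    exact markXi_le_of_mem_Ioc hk1 ⟨hlk, h k hk1⟩
  · push Not at hk
    have hempty : {j | 1 ≤ j ∧ marked η ζ (l + j) ω} = ∅ := by
      refine Set.eq_empty_of_forall_notMem fun j hj => ?_
      obtain ⟨hj1, k, hk1, hlt, -⟩ := hj
      have := (psum_strictMono hη).monotone (show l ≤ l + j - 1 by omega)
      linarith [hk k hk1]
    simp [markXi, hempty]

/-- Starting at `τ_{l+1}` rather than `τ_l` makes the renewal point found lie strictly after `τ_l`,
even when it coincides with the starting point. -/
theorem markXi_le_succ_of_fwdTime_lt (hη : ∀ i, 0 < η i ω) (hζ : ∀ i, 0 < ζ i ω) {l m : ℕ}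
    (h : fwdTime ζ (psum η (l + 1) ω) ω < psum η (l + 1 + m) ω - psum η (l + 1) ω) :
    markXi η ζ l ω ≤ m + 1 := by
  have hτ := psum_strictMono hη
  have hend : l + 1 + m = l + (m + 1) := by omega
  rcases fwdTime_cases hζ (psum η (l + 1) ω) with ⟨j, hj1, htj, -, hγ⟩ | ⟨hall, -⟩
  · refine markXi_le_of_mem_Ioc hj1 ⟨(hτ l.lt_succ_self).trans_le htj, ?_⟩
    rw [← hend]
    linarith
  · exact markXi_le_of_forall_le hη fun k _ =>
      (hall k).le.trans (hτ.monotone (by omega))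

/-- The second alternative is the case `ξ(l) = sInf ∅ = 0`: no `τ_i` after `τ_l` is marked, so the
next renewal point of `Z` lies beyond every `τ_{l+k}`. -/
theorem fwdTime_lt_or_le_of_markXi_le (hη : ∀ i, 0 < η i ω) (hζ : ∀ i, 0 < ζ i ω) {l m : ℕ}
    (hξ : markXi η ζ l ω ≤ m) (k : ℕ) :
    fwdTime ζ (psum η l ω) ω < psum η (l + (m + 1)) ω - psum η l ω ∨
      psum η (l + k) ω - psum η l ω ≤ fwdTime ζ (psum η l ω) ω := by
  have hτ := psum_strictMono hη
  have hgap : psum η l ω < psum η (l + (m + 1)) ω := hτ (by omega)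
  rcases fwdTime_cases hζ (psum η l ω) with ⟨j, hj1, htj, hbefore, hγ⟩ | ⟨-, hneg⟩
  · by_cases hjm : psum ζ j ω < psum η (l + (m + 1)) ω
    · exact Or.inl (by linarith)
    push Not at hjm
    have hunmarked := forall_not_marked_of_markXi_le hη hξ fun k' hk' hmem => by
      rcases lt_or_ge k' j with hk'j | hjk'
      · exact (hbefore k' hk' hk'j).not_ge hmem.1.le
      · have := (psum_strictMono hζ).monotone hjk'
        have := hτ (show l + m < l + (m + 1) by omega)
        linarith [hmem.2]
    refine Or.inr (sub_le_sub_right ?_ _ |>.trans hγ.ge)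
    by_contra! hk
    obtain ⟨i, hi1, -, hmarked⟩ := exists_marked_of_mem_Ioc hj1 ⟨hgap.trans_le hjm, hk.le⟩
    exact hunmarked i hi1 hmarked
  · exact Or.inl (by linarith)

end Deterministic

theorem Nat.sSup_eq_iSup_indicator (S : Set ℕ) : sSup S = ⨆ n, S.indicator id n := by
  have hle : ∀ n b, (∀ m ∈ S, m ≤ b) → S.indicator id n ≤ b := fun n b hb => by
    by_cases hn : n ∈ S
    · simpa [Set.indicator_of_mem hn] using hb n hn
    · simp [Set.indicator_of_notMem hn]
  by_cases hS : BddAbove S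
  · have hg : BddAbove (Set.range fun n => S.indicator id n) := by
      obtain ⟨b, hb⟩ := hS
      exact ⟨b, Set.forall_mem_range.2 fun n => hle n b hb⟩
    refine le_antisymm ?_ (ciSup_le' fun n => hle n _ fun m hm => le_csSup hS hm)
    rcases S.eq_empty_or_nonempty with hempty | hne
    · simp [hempty]
    · exact csSup_le hne fun n hn => le_ciSup_of_le hg n (by simp [Set.indicator_of_mem hn])
  · rw [Nat.sSup_of_not_bddAbove hS, Nat.iSup_of_not_bddAbove]
    rintro ⟨b, hb⟩
    refine hS ⟨b, fun n hn => ?_⟩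
    simpa [Set.indicator_of_mem hn] using hb (Set.mem_range_self n)

theorem measurable_sSup_setOf_mem {X : Type*} [MeasurableSpace X] {A : ℕ → Set X}
    (hA : ∀ n, MeasurableSet (A n)) : Measurable fun x => sSup {n | x ∈ A n} := by
  simp_rw [Nat.sSup_eq_iSup_indicator]
  exact Measurable.iSup fun n => measurable_const.indicator (hA n)

theorem measurable_psum {Ω : Type*} [MeasurableSpace Ω] {f : ℕ → Ω → ℝ}
    (hf : ∀ i, Measurable (f i)) (n : ℕ) : Measurable (psum f n) :=
  Finset.measurable_sum _ fun i _ => hf i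

theorem measurable_fwdTime {Ω : Type*} [MeasurableSpace Ω] {ζ : ℕ → Ω → ℝ}
    (hζ : ∀ i, Measurable (ζ i)) {T : Ω → ℝ} (hT : Measurable T) :
    Measurable fun ω => fwdTime ζ (T ω) ω := by
  have hN : Measurable fun ω => sSup {n | psum ζ n ω < T ω} :=
    measurable_sSup_setOf_mem fun n => measurableSet_lt (measurable_psum hζ n) hT
  have hnext : Measurable fun q : Ω × ℕ => psum ζ (q.2 + 1) q.1 :=
    measurable_from_prod_countable_left fun n => measurable_psum hζ (n + 1)
  exact (hnext.comp (measurable_id.prodMk hN)).sub hT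

namespace ProbabilityTheory

variable {Ω : Type*} [MeasurableSpace Ω] {P : Measure Ω}

theorem iIndepFun.indepFun_of_disjoint_range {ι κ κ' β : Type*} [MeasurableSpace β]
    {f : ι → Ω → β} (h : iIndepFun f P) (hf : ∀ i, Measurable (f i)) {a : κ → ι} {b : κ' → ι}
    (hab : Disjoint (Set.range a) (Set.range b)) :
    IndepFun (fun ω k => f (a k) ω) (fun ω k => f (b k) ω) P := by
  have hind := indep_iSup_of_disjoint (fun i => (hf i).comap_le)
    ((iIndepFun_iff_iIndep _ _ _).1 h) hab
  rw [IndepFun_iff_Indep]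
  refine indep_of_indep_of_le_left (indep_of_indep_of_le_right hind ?_) ?_
  all_goals
    simp_rw [MeasurableSpace.pi, MeasurableSpace.comap_iSup, MeasurableSpace.comap_comp,
      Function.comp_def]
    exact iSup_le fun k => le_iSup₂_of_le _ ⟨k, rfl⟩ le_rfl

theorem abs_measureReal_preimage_sub_le_of_indepFun [IsProbabilityMeasure P]
    {α β : Type*} [MeasurableSpace α] [MeasurableSpace β] {X : Ω → α} {Y : Ω → β}
    (hX : Measurable X) (hY : Measurable Y) (hXY : IndepFun X Y P) {A : Set (α × β)}
    (hA : MeasurableSet A) {s : Set α} (hXs : ∀ ω, X ω ∈ s) {r C : ℝ}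
    (hC : ∀ t ∈ s, |P.real (Y ⁻¹' (Prod.mk t ⁻¹' A)) - r| ≤ C) :
    |P.real ((fun ω => (X ω, Y ω)) ⁻¹' A) - r| ≤ C := by
  set μ := P.map X
  set ν := P.map Y
  have : IsProbabilityMeasure μ := Measure.isProbabilityMeasure_map hX.aemeasurable
  have hslice_meas : Measurable fun t => ν (Prod.mk t ⁻¹' A) := measurable_measure_prodMk_left hA
  have hslice : ∀ t, ν.real (Prod.mk t ⁻¹' A) = P.real (Y ⁻¹' (Prod.mk t ⁻¹' A)) := fun t =>
    map_measureReal_apply hY (measurable_prodMk_left hA)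
  have hprod : P.real ((fun ω => (X ω, Y ω)) ⁻¹' A) = ∫ t, ν.real (Prod.mk t ⁻¹' A) ∂μ := by
    rw [← map_measureReal_apply (hX.prodMk hY) hA,
      (indepFun_iff_map_prod_eq_prod_map_map hX.aemeasurable hY.aemeasurable).1 hXY,
      measureReal_def, Measure.prod_apply hA]
    exact (integral_toReal hslice_meas.aemeasurable (ae_of_all _ fun t => measure_lt_top _ _)).symm
  have hbound : ∀ᵐ t ∂μ, ‖ν.real (Prod.mk t ⁻¹' A) - r‖ ≤ C :=
    (ae_map_iff hX.aemeasurable (measurableSet_le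
      ((hslice_meas.ennreal_toReal.sub_const r).norm) measurable_const)).2
      (ae_of_all _ fun ω => by
        show ‖ν.real _ - r‖ ≤ C
        rw [hslice, Real.norm_eq_abs]
        exact hC _ (hXs ω))
  have hint : Integrable (fun t => ν.real (Prod.mk t ⁻¹' A)) μ :=
    Integrable.of_bound hslice_meas.ennreal_toReal.aestronglyMeasurable 1
      (ae_of_all _ fun t => by
        rw [Real.norm_of_nonneg measureReal_nonneg]
        exact measureReal_le_one)
  calc |P.real ((fun ω => (X ω, Y ω)) ⁻¹' A) - r|
      = ‖∫ t, (ν.real (Prod.mk t ⁻¹' A) - r) ∂μ‖ := by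
        rw [integral_sub hint (integrable_const r), integral_const, hprod]
        simp
    _ ≤ C := by simpa using norm_integral_le_of_norm_le_const hbound

end ProbabilityTheory

/-- `z j` plays the role of `ζ_{j+1}`. -/
def fwdTimeSeq (z : ℕ → ℝ) (t : ℝ) : ℝ :=
  fwdTime (fun i (z : ℕ → ℝ) => z (i - 1)) t z

theorem fwdTime_eq_fwdTimeSeq {Ω : Type*} (ζ : ℕ → Ω → ℝ) (t : ℝ) (ω : Ω) :
    fwdTime ζ t ω = fwdTimeSeq (fun j => ζ (j + 1) ω) t :=
  fwdTime_congr (fun i hi => by simp [Nat.sub_add_cancel hi]) t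

theorem measurable_fwdTimeSeq : Measurable fun q : (ℕ → ℝ) × ℝ => fwdTimeSeq q.1 q.2 :=
  measurable_fwdTime (ζ := fun i (q : (ℕ → ℝ) × ℝ) => q.1 (i - 1)) (fun i => by fun_prop)
    measurable_snd

theorem measurableSet_fwdTimeSeq_lt :
    MeasurableSet {q : ℝ × ((ℕ → ℝ) × ℝ) | fwdTimeSeq q.2.1 q.1 < q.2.2} :=
  measurableSet_lt
    (measurable_fwdTimeSeq.comp (f := fun q : ℝ × ((ℕ → ℝ) × ℝ) => (q.2.1, q.1)) (by fun_prop))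
    measurable_snd.snd

section Probabilistic

variable {Ω : Type*} [MeasurableSpace Ω] {P : Measure Ω} {η ζ : ℕ → Ω → ℝ}

def fwdTimeLtGap (η ζ : ℕ → Ω → ℝ) (p k : ℕ) : Set Ω :=
  {ω | fwdTime ζ (psum η p ω) ω < psum η (p + k) ω - psum η p ω}

theorem measurableSet_fwdTimeLtGap (hηmeas : ∀ i, Measurable (η i))
    (hζmeas : ∀ i, Measurable (ζ i)) (p k : ℕ) : MeasurableSet (fwdTimeLtGap η ζ p k) :=
  measurableSet_lt (measurable_fwdTime hζmeas (measurable_psum hηmeas p))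
    ((measurable_psum hηmeas _).sub (measurable_psum hηmeas p))

theorem bddAbove_range_abs_measureReal_sub [IsProbabilityMeasure P] {ι : Type*}
    (s : ι → Set Ω) (r : ℝ) : BddAbove (Set.range fun i => |P.real (s i) - r|) := by
  refine ⟨1 + |r|, Set.forall_mem_range.2 fun i => abs_le.2 ⟨?_, ?_⟩⟩
  · linarith [measureReal_nonneg (μ := P) (s := s i), le_abs_self r]
  · linarith [measureReal_le_one (μ := P) (s := s i), neg_abs_le r]

theorem indepFun_psum_shift (hηmeas : ∀ i, Measurable (η i)) (hζmeas : ∀ i, Measurable (ζ i))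
    (hindep : iIndepFun (Sum.elim (fun i => η (i + 1)) (fun i => ζ (i + 1))) P) (p : ℕ) :
    IndepFun (psum η p)
      (fun ω j => Sum.elim (fun i => η (i + 1)) (fun i => ζ (i + 1)) (Sum.map (p + ·) id j) ω)
      P := by
  have hτ : psum η p = fun ω => ∑ i : Fin p, η (i + 1) ω := by
    funext ω
    rw [psum_eq_sum_range, Fin.sum_univ_eq_sum_range (fun i => η (i + 1) ω)]
  rw [hτ]
  refine (hindep.indepFun_of_disjoint_range (Sum.rec (fun i => hηmeas _) (fun i => hζmeas _))
    (a := fun i : Fin p => .inl i) ?_).comp (φ := fun x => ∑ i, x i) (ψ := id) (by fun_prop)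
    measurable_id
  rw [Set.disjoint_left]
  rintro _ ⟨i, rfl⟩ ⟨_ | j, hj⟩
  · simp only [Sum.map_inl, Sum.inl.injEq] at hj
    omega
  · simp at hj

theorem identDistrib_shift (hζmeas : ∀ i, Measurable (ζ i))
    (hindep : iIndepFun (Sum.elim (fun i => η (i + 1)) (fun i => ζ (i + 1))) P)
    (hηid : ∀ i, 1 ≤ i → IdentDistrib (η i) (η 1) P P) (p : ℕ) :
    IdentDistrib
      (fun ω j => Sum.elim (fun i => η (i + 1)) (fun i => ζ (i + 1)) (Sum.map (p + ·) id j) ω)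
      (fun ω j => Sum.elim (fun i => η (i + 1)) (fun i => ζ (i + 1)) j ω) P P := by
  refine IdentDistrib.pi ?_ (hindep.precomp (Sum.map_injective.2 ⟨add_right_injective p,
    Function.injective_id⟩)) hindep
  rintro (i | i)
  · exact (hηid _ (by omega)).trans (hηid _ (by omega)).symm
  · exact IdentDistrib.refl (hζmeas _).aemeasurable

/-- `τ_p` is independent of `(Z, τ_{p+k} − τ_p)`, and the latter is distributed as `(Z, τ_k)`;
conditioning on `τ_p = t ≥ 0` thus reduces the event to `{γ₂⁺(t) < τ_k}`. -/
theorem abs_measureReal_fwdTimeLtGap_sub_le (hηmeas : ∀ i, Measurable (η i))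
    (hζmeas : ∀ i, Measurable (ζ i)) (hη : ∀ i ω, 0 ≤ η i ω)
    (hindep : iIndepFun (Sum.elim (fun i => η (i + 1)) (fun i => ζ (i + 1))) P)
    (hηid : ∀ i, 1 ≤ i → IdentDistrib (η i) (η 1) P P) (p k : ℕ) (r : ℝ) :
    |P.real (fwdTimeLtGap η ζ p k) - r| ≤
      ⨆ t : Set.Ici (0 : ℝ), |P.real {ω | fwdTime ζ t.1 ω < psum η k ω} - r| := by
  have := hindep.isProbabilityMeasure
  set F := Sum.elim (fun i => η (i + 1)) (fun i => ζ (i + 1))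
  have hF : ∀ j, Measurable (F j) := Sum.rec (fun i => hηmeas _) (fun i => hζmeas _)
  set blocks : (ℕ ⊕ ℕ → ℝ) → (ℕ → ℝ) × ℝ :=
    fun x => (fun j => x (.inr j), ∑ i ∈ Finset.range k, x (.inl i))
  have hblocks : Measurable blocks := by fun_prop
  let A : Set (ℝ × ((ℕ → ℝ) × ℝ)) := {q | fwdTimeSeq q.2.1 q.1 < q.2.2}
  have hA : MeasurableSet A := measurableSet_fwdTimeSeq_lt
  set Y := fun ω => blocks fun j => F (Sum.map (p + ·) id j) ω
  have hY : Measurable Y := hblocks.comp (measurable_pi_lambda _ fun j => hF _)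
  have hXY : IndepFun (psum η p) Y P :=
    (indepFun_psum_shift hηmeas hζmeas hindep p).comp measurable_id hblocks
  have hlaw : IdentDistrib Y (fun ω => blocks fun j => F j ω) P P :=
    (identDistrib_shift hζmeas hindep hηid p).comp hblocks
  have hevent : fwdTimeLtGap η ζ p k = (fun ω => (psum η p ω, Y ω)) ⁻¹' A := by
    ext ω
    simp only [fwdTimeLtGap, A, Y, blocks, F, Set.mem_ofPred_eq, Set.mem_preimage, Sum.map_inl,
      Sum.map_inr, Sum.elim_inl, Sum.elim_inr, id, fwdTime_eq_fwdTimeSeq, psum_add_sub]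
  have hslice : ∀ t, (fun ω => blocks fun j => F j ω) ⁻¹' (Prod.mk t ⁻¹' A) =
      {ω | fwdTime ζ t ω < psum η k ω} := fun t => by
    ext ω
    simp only [A, blocks, F, Set.mem_preimage, Set.mem_ofPred_eq, Sum.elim_inl, Sum.elim_inr,
      fwdTime_eq_fwdTimeSeq, psum_eq_sum_range]
  rw [hevent]
  refine abs_measureReal_preimage_sub_le_of_indepFun (measurable_psum hηmeas p) hY hXY hA
    (s := Set.Ici 0) (fun ω => psum_nonneg (fun i => hη i ω) p) fun t ht => ?_
  rw [measureReal_def, hlaw.measure_mem_eq (measurable_prodMk_left hA), ← measureReal_def, hslice]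
  exact le_ciSup (bddAbove_range_abs_measureReal_sub
    (fun t : Set.Ici (0 : ℝ) => {ω | fwdTime ζ t.1 ω < psum η k ω}) r) (⟨t, ht⟩ : Set.Ici (0 : ℝ))

theorem measureReal_fwdTimeLtGap_le_markXi [IsFiniteMeasure P] (hη : ∀ i ω, 0 < η i ω)
    (hζ : ∀ i ω, 0 < ζ i ω) {l m : ℕ} {a : ℝ} (hm : m + 1 ≤ ⌊a⌋₊) :
    P.real (fwdTimeLtGap η ζ (l + 1) m) ≤ P.real {ω | (markXi η ζ l ω : ℝ) ≤ a} := by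
  have ha : 0 ≤ a := zero_le_one.trans (Nat.floor_pos.1 (by omega))
  refine measureReal_mono fun ω hω => ?_
  have hξ := markXi_le_succ_of_fwdTime_lt (fun i => hη i ω) (fun i => hζ i ω) hω
  exact (Nat.cast_le.2 (hξ.trans hm)).trans (Nat.floor_le ha)

theorem measureReal_markXi_le_fwdTimeLtGap [IsProbabilityMeasure P]
    (hηmeas : ∀ i, Measurable (η i)) (hζmeas : ∀ i, Measurable (ζ i))
    (hη : ∀ i ω, 0 < η i ω) (hζ : ∀ i ω, 0 < ζ i ω) {l m : ℕ} {a : ℝ} (hm : ⌊a⌋₊ + 1 ≤ m)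
    (k : ℕ) :
    P.real {ω | (markXi η ζ l ω : ℝ) ≤ a} ≤
      P.real (fwdTimeLtGap η ζ l m) + (1 - P.real (fwdTimeLtGap η ζ l k)) := by
  have hsub : {ω | (markXi η ζ l ω : ℝ) ≤ a} ⊆
      fwdTimeLtGap η ζ l m ∪ (fwdTimeLtGap η ζ l k)ᶜ := fun ω hω => by
    rcases fwdTime_lt_or_le_of_markXi_le (fun i => hη i ω) (fun i => hζ i ω)
      (Nat.le_floor (show (markXi η ζ l ω : ℝ) ≤ a from hω)) k
      with hlt | hge
    · refine Or.inl (hlt.trans_le (sub_le_sub_right ?_ _))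
      exact (psum_strictMono fun i => hη i ω).monotone (by omega)
    · exact Or.inr hge.not_gt
  calc P.real {ω | (markXi η ζ l ω : ℝ) ≤ a}
      ≤ P.real (fwdTimeLtGap η ζ l m ∪ (fwdTimeLtGap η ζ l k)ᶜ) := measureReal_mono hsub
    _ ≤ P.real (fwdTimeLtGap η ζ l m) + P.real (fwdTimeLtGap η ζ l k)ᶜ := measureReal_union_le _ _
    _ = _ := by rw [probReal_compl_eq_one_sub (measurableSet_fwdTimeLtGap hηmeas hζmeas l k)]

end Probabilistic

theorem Monotone.exists_continuousAt_mem_Ioo {G : ℝ → ℝ} (hG : Monotone G) {a b : ℝ}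
    (hab : a < b) : ∃ y ∈ Set.Ioo a b, ContinuousAt G y := by
  obtain ⟨y, hy, hyab⟩ := (hG.countable_not_continuousAt.dense_compl ℝ).exists_mem_open
    isOpen_Ioo (Set.nonempty_Ioo.2 hab)
  exact ⟨y, hyab, not_not.1 hy⟩

/-- The defect `1 - G w` in the upper bound absorbs mass that may escape to infinity. -/
theorem Monotone.tendsto_of_eventually_bounds {G : ℝ → ℝ} (hG : Monotone G)
    (hGtop : Tendsto G atTop (nhds 1)) {x : ℝ} (hx : 0 < x) (hGx : ContinuousAt G x)
    {u : ℕ → ℝ}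
    (hlow : ∀ y ∈ Set.Ioo 0 x, ContinuousAt G y → ∀ ε > 0, ∀ᶠ n in atTop, G y - ε < u n)
    (hup : ∀ z w, x < z → 0 < w → ContinuousAt G z → ContinuousAt G w → ∀ ε > 0,
      ∀ᶠ n in atTop, u n < G z + (1 - G w) + ε) :
    Tendsto u atTop (nhds (G x)) := by
  rw [tendsto_order]
  constructor
  · intro a ha
    obtain ⟨lo, hi, hxlh, hsub⟩ :=
      mem_nhds_iff_exists_Ioo_subset.1 (hGx.eventually (lt_mem_nhds ha))
    obtain ⟨y, hy, hGy⟩ := hG.exists_continuousAt_mem_Ioo (max_lt hxlh.1 hx)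
    have hay : a < G y := hsub ⟨(le_max_left _ _).trans_lt hy.1, hy.2.trans hxlh.2⟩
    filter_upwards [hlow y ⟨(le_max_right _ _).trans_lt hy.1, hy.2⟩ hGy (G y - a)
      (by linarith)] with n hn
    linarith
  · intro b hb
    obtain ⟨lo, hi, hxlh, hsub⟩ :=
      mem_nhds_iff_exists_Ioo_subset.1 (hGx.eventually (gt_mem_nhds hb))
    obtain ⟨z, hz, hGz⟩ := hG.exists_continuousAt_mem_Ioo hxlh.2
    have hzb : G z < b := hsub ⟨hxlh.1.trans hz.1, hz.2⟩
    obtain ⟨W, hW⟩ := eventually_atTop.1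
      (hGtop.eventually (lt_mem_nhds (show 1 - (b - G z) / 2 < 1 by linarith)))
    obtain ⟨w, hw, hGw⟩ := hG.exists_continuousAt_mem_Ioo (lt_add_one (max W 0))
    have hGw' := hW w ((le_max_left _ _).trans hw.1.le)
    filter_upwards [hup z w hz.1 ((le_max_right _ _).trans_lt hw.1) hGz hGw ((b - G z) / 4)
      (by linarith)] with n hn
    linarith

theorem eventually_floor_mul_add_one_le {c : ℕ → ℝ} (hc : Tendsto c atTop atTop) {y x : ℝ}
    (hy : 0 ≤ y) (hyx : y < x) : ∀ᶠ n in atTop, ⌊c n * y⌋₊ + 1 ≤ ⌊c n * x⌋₊ := by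
  have hxy : 0 < x - y := sub_pos.2 hyx
  filter_upwards [hc.eventually_ge_atTop (x - y)⁻¹] with n hn
  have hcn : 0 ≤ c n := (inv_pos.2 hxy).le.trans hn
  have hgap : 1 ≤ c n * x - c n * y := by
    rw [← mul_sub, ← inv_mul_cancel₀ hxy.ne']
    exact mul_le_mul_of_nonneg_right hn hxy.le
  apply Nat.le_floor
  push_cast
  linarith [Nat.floor_le (mul_nonneg hcn hy)]

theorem markXi_scaled_cdf_tendsto_general
    {Ω : Type*} [MeasurableSpace Ω] (P : Measure Ω) [IsProbabilityMeasure P]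
    (η ζ : ℕ → ℕ → Ω → ℝ)
    (hηmeas : ∀ n i, Measurable (η n i)) (hζmeas : ∀ n i, Measurable (ζ n i))
    (hηpos : ∀ n i ω, 0 < η n i ω) (hζpos : ∀ n i ω, 0 < ζ n i ω)
    (hindep : ∀ n, iIndepFun
      (Sum.elim (fun i => η n (i + 1)) (fun i => ζ n (i + 1))) P)
    (hηid : ∀ n i, 1 ≤ i → IdentDistrib (η n i) (η n 1) P P)
    (c : ℕ → ℝ) (hc : Tendsto c atTop atTop)
    (G : ℝ → ℝ) (hGmono : Monotone G) (hGtop : Tendsto G atTop (nhds 1))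
    (h1 : ∀ x > (0 : ℝ), ContinuousAt G x →
      Tendsto (fun n => ⨆ t : Set.Ici (0 : ℝ),
          |(P {ω | fwdTime (ζ n) t.1 ω < psum (η n) ⌊c n * x⌋₊ ω}).toReal - G x|)
        atTop (nhds 0)) :
    ∀ l : ℕ, ∀ x > (0 : ℝ), ContinuousAt G x →
      Tendsto (fun n => (P {ω | (markXi (η n) (ζ n) l ω : ℝ) ≤ c n * x}).toReal)
        atTop (nhds (G x)) := by
  intro l x hx hGx
  simp_rw [← measureReal_def] at h1 ⊢
  have hkey : ∀ n p y, |P.real (fwdTimeLtGap (η n) (ζ n) p ⌊c n * y⌋₊) - G y| ≤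
      ⨆ t : Set.Ici (0 : ℝ), |P.real {ω | fwdTime (ζ n) t.1 ω < psum (η n) ⌊c n * y⌋₊ ω} - G y| :=
    fun n p y => abs_measureReal_fwdTimeLtGap_sub_le (hηmeas n) (hζmeas n)
      (fun i ω => (hηpos n i ω).le) (hindep n) (hηid n) p _ _
  have hsmall : ∀ y > (0 : ℝ), ContinuousAt G y → ∀ ε > 0, ∀ᶠ n in atTop,
      ⨆ t : Set.Ici (0 : ℝ), |P.real {ω | fwdTime (ζ n) t.1 ω < psum (η n) ⌊c n * y⌋₊ ω} - G y|
        < ε :=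
    fun y hy hGy ε hε => (h1 y hy hGy).eventually (gt_mem_nhds hε)
  refine hGmono.tendsto_of_eventually_bounds hGtop hx hGx ?_ ?_
  · intro y hy hGy ε hε
    filter_upwards [hsmall y hy.1 hGy ε hε, eventually_floor_mul_add_one_le hc hy.1.le hy.2]
      with n hS hfloor
    have := measureReal_fwdTimeLtGap_le_markXi (P := P) (l := l) (hηpos n) (hζpos n) hfloor
    linarith [abs_le.1 (hkey n (l + 1) y)]
  · intro z w hz hw hGz hGw ε hε
    filter_upwards [hsmall z (hx.trans hz) hGz (ε / 2) (half_pos hε), hsmall w hw hGw (ε / 2)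
      (half_pos hε), eventually_floor_mul_add_one_le hc hx.le hz] with n hSz hSw hfloor
    have := measureReal_markXi_le_fwdTimeLtGap (P := P) (l := l) (hηmeas n) (hζmeas n)
      (hηpos n) (hζpos n) hfloor ⌊c n * w⌋₊
    linarith [abs_le.1 (hkey n l z), abs_le.1 (hkey n l w)]

/-- If `sup_{t ≥ 0} |P(γ_{n,2}⁺(t) < τ_{n,⌊c_n x⌋}) − G(x)| → 0` at every continuity
point `x > 0` of `G` (where `τ_n` is a sum of i.i.d. copies of `η_{n,1}` independent
of `Z_n`, since `H_n ⟂ Z_n`), then for every fixed `l` and every continuity point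
`x > 0` of `G`, `P(ξ_n(l) ≤ c_n x) → G(x)`. -/
theorem markXi_scaled_cdf_tendsto
    {Ω : Type*} [MeasurableSpace Ω] (P : Measure Ω) [IsProbabilityMeasure P]
    (η ζ : ℕ → ℕ → Ω → ℝ)
    (hηmeas : ∀ n i, Measurable (η n i)) (hζmeas : ∀ n i, Measurable (ζ n i))
    (hηpos : ∀ n i ω, 0 < η n i ω) (hζpos : ∀ n i ω, 0 < ζ n i ω)
    (hindep : ∀ n, iIndepFun
      (Sum.elim (fun i => η n (i + 1)) (fun i => ζ n (i + 1))) P)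
    (hηid : ∀ n i, 1 ≤ i → IdentDistrib (η n i) (η n 1) P P)
    (hζid : ∀ n i, 1 ≤ i → IdentDistrib (ζ n i) (ζ n 1) P P)
    (c : ℕ → ℝ) (hcpos : ∀ n, 0 < c n) (hc : Tendsto c atTop atTop)
    (G : ℝ → ℝ) (hGmono : Monotone G) (hGtop : Tendsto G atTop (nhds 1))
    (h1 : ∀ x > (0 : ℝ), ContinuousAt G x →
      Tendsto (fun n => ⨆ t : Set.Ici (0 : ℝ),
          |(P {ω | fwdTime (ζ n) t.1 ω < psum (η n) ⌊c n * x⌋₊ ω}).toReal - G x|)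
        atTop (nhds 0)) :
    ∀ l : ℕ, ∀ x > (0 : ℝ), ContinuousAt G x →
      Tendsto (fun n => (P {ω | (markXi (η n) (ζ n) l ω : ℝ) ≤ c n * x}).toReal)
        atTop (nhds (G x)) :=
  markXi_scaled_cdf_tendsto_general P η ζ hηmeas hζmeas hηpos hζpos hindep hηid c hc G hGmono hGtop
    h1
end
end
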